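/- Suppose $\sigma$ is a $K$-algebra endomorphism of $L$ such that $\sigma(X_n) = \dfrac{P_n}{X_{n-1} P_{n-2}}$ for all $n \in \mathbb{Z}/m\mathbb{Z}$. Then for every $n \in \mathbb{Z}/m\mathbb{Z}$ one has $\sigma(P_n) = P_{n-1} \cdot \dfrac{X_n}{\prod_{k \in \mathbb{Z}/m\mathbb{Z}} X_k}$. -/

import Mathlib

/- Setting: `Lm K m` is the field of fractions of the (Laurent) polynomial ring over a field
`K` in commuting variables `yv n` indexed by `n : ZMod m`, with fixed scalars `F n : K`. -/

noncomputable section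

variable (K : Type) [Field K] (m : ℕ) [NeZero m]

/-- The ambient field `L`. -/
abbrev Lm := FractionRing (MvPolynomial (ZMod m) K)

/-- The variable `y_n`. -/
def yv (n : ZMod m) : Lm K m :=
  algebraMap (MvPolynomial (ZMod m) K) (Lm K m) (MvPolynomial.X n)

variable (F : ZMod m → K)

/-- The scalar `F_n` viewed inside `L`. -/
def Fc (n : ZMod m) : Lm K m := algebraMap K (Lm K m) (F n)

/-- `X_n = F_n / (y_n y_{n+1})`. -/
def Xv (n : ZMod m) : Lm K m := Fc K m F n / (yv K m n * yv K m (n + 1))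

/-- `P_n = 1 + ∑_{k=0}^{m-2} X_n X_{n-1} ⋯ X_{n-k}`. -/
def Pv (n : ZMod m) : Lm K m :=
  1 + ∑ k ∈ Finset.range (m - 1), ∏ j ∈ Finset.range (k + 1), Xv K m F (n - (j : ZMod m))

/-- `z_n = y_n (1 + X_n)`. -/
def zv (n : ZMod m) : Lm K m := yv K m n * (1 + Xv K m F n)

/-- `𝐲 = ∏_n y_n`. -/
def boldy : Lm K m := ∏ n : ZMod m, yv K m n

/-- `𝐅 = ∏_n F_n` (viewed in `L`). -/
def boldF : Lm K m := ∏ n : ZMod m, Fc K m F n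

/-- `δ = 𝐲 - 𝐅/𝐲`. -/
def deltav : Lm K m := boldy K m - boldF K m F / boldy K m

/-! Writing `𝐗 = ∏ₖ Xₖ`, the cyclic sums satisfy `Pₙ = 1 + Xₙ Pₙ₋₁ - 𝐗`, and the hypothesis on `σ`
telescopes around the cycle to `σ(𝐗) = 𝐗⁻¹`. Applying `σ` to the recurrence shows that both
`σ(Pₙ)` and `Pₙ₋₁ Xₙ / 𝐗` solve `Dₙ = 1 + σ(Xₙ) Dₙ₋₁ - 𝐗⁻¹`, so their difference `Eₙ` satisfies
`Eₙ = σ(Xₙ) Eₙ₋₁`. Going once around the cycle gives `Eₙ = σ(𝐗) Eₙ = 𝐗⁻¹ Eₙ`, and `𝐗 ≠ 1`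
because `𝐗 = 𝐅 / 𝐲²` with `𝐅` a nonzero constant. -/

open Finset

section Cyclic

variable {m : ℕ} [NeZero m]

theorem prod_range_sub_natCast_eq_prod_univ {M : Type*} [CommMonoid M] (f : ZMod m → M)
    (n : ZMod m) : ∏ j ∈ range m, f (n - j) = ∏ k, f k := by
  refine prod_bij' (fun j _ => n - j) (fun k _ => (n - k).val) (by simp)
    (fun k _ => mem_range.mpr (ZMod.val_lt _)) ?_ (by simp) (fun _ _ => rfl)
  intro j hj
  simpa using ZMod.val_cast_of_lt (mem_range.mp hj)

theorem one_add_sum_prod_sub_natCast_eq {R : Type*} [CommRing R] (f : ZMod m → R) (n : ZMod m) :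
    1 + ∑ k ∈ range (m - 1), ∏ j ∈ range (k + 1), f (n - j)
      = 1 + f n * (1 + ∑ k ∈ range (m - 1), ∏ j ∈ range (k + 1), f (n - 1 - j))
        - ∏ k, f k := by
  have hm : range m = range (m - 1 + 1) := by rw [Nat.sub_add_cancel NeZero.one_le]
  have hlast : ∑ k ∈ range m, ∏ j ∈ range (k + 1), f (n - j)
      = ∑ k ∈ range (m - 1), ∏ j ∈ range (k + 1), f (n - j) + ∏ k, f k := by
    rw [hm, sum_range_succ, ← hm, prod_range_sub_natCast_eq_prod_univ]
  have hfirst : ∑ k ∈ range m, ∏ j ∈ range (k + 1), f (n - j)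
      = f n * (1 + ∑ k ∈ range (m - 1), ∏ j ∈ range (k + 1), f (n - 1 - j)) := by
    have hshift (k : ℕ) : ∏ j ∈ range (k + 1 + 1), f (n - j)
        = f n * ∏ j ∈ range (k + 1), f (n - 1 - j) := by
      rw [prod_range_succ', mul_comm]
      congr 1
      · simp
      · refine prod_congr rfl fun j _ => congrArg f ?_
        push_cast
        ring
    rw [hm, sum_range_succ', sum_congr rfl fun k _ => hshift k, ← mul_sum]
    simp [mul_add, add_comm]
  linear_combination hfirst - hlast

theorem eq_prod_mul_self_of_eq_mul_sub_one {M : Type*} [CommMonoid M] {g D : ZMod m → M}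
    (hD : ∀ k, D k = g k * D (k - 1)) (n : ZMod m) : D n = (∏ k, g k) * D n := by
  have hiter (t : ℕ) : D n = (∏ j ∈ range t, g (n - j)) * D (n - t) := by
    induction t with
    | zero => simp
    | succ t ih =>
      rw [ih, hD (n - t), prod_range_succ, mul_assoc]
      congr 3
      push_cast
      ring
  simpa [prod_range_sub_natCast_eq_prod_univ] using hiter m

theorem prod_div_mul_sub_eq_inv {L : Type*} [Field L] (x p : ZMod m → L)
    (hp : ∀ k, p k ≠ 0) :
    ∏ k, p k / (x (k - 1) * p (k - 2)) = (∏ k, x k)⁻¹ := by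
  have hshift (f : ZMod m → L) (a : ZMod m) : ∏ k, f (k - a) = ∏ k, f k :=
    Fintype.prod_equiv (Equiv.subRight a) _ _ fun _ => rfl
  rw [prod_div_distrib, prod_mul_distrib, hshift x, hshift p,
    div_mul_cancel_right₀ (prod_ne_zero_iff.mpr fun k _ => hp k)]

theorem map_eq_of_cyclic_recurrence {L : Type*} [Field L] {x p : ZMod m → L} (σ : L →+* L)
    (hx : ∀ k, x k ≠ 0) (hx₁ : ∏ k, x k ≠ 1)
    (hp : ∀ k, p k = 1 + x k * p (k - 1) - ∏ j, x j)
    (hσ : ∀ k, σ (x k) = p k / (x (k - 1) * p (k - 2))) (n : ZMod m) :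
    σ (p n) = p (n - 1) * (x n / ∏ k, x k) := by
  set X := ∏ k, x k
  have hX : X ≠ 0 := prod_ne_zero_iff.mpr fun k _ => hx k
  have hp₀ (k : ZMod m) : p k ≠ 0 := fun h =>
    hx k (σ.injective (by rw [hσ k, h, zero_div, map_zero]))
  have hσX : σ X = X⁻¹ := by
    rw [map_prod, prod_congr rfl fun k _ => hσ k, prod_div_mul_sub_eq_inv x p hp₀]
  set E := fun k => σ (p k) - p (k - 1) * (x k / X)
  have hE (k : ZMod m) : E k = σ (x k) * E (k - 1) := by
    have hσp : σ (p k) = 1 + σ (x k) * σ (p (k - 1)) - X⁻¹ := by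
      rw [← hσX, ← map_mul, ← map_one σ, ← map_add, ← map_sub, ← hp]
    have hk : k - 1 - 1 = k - 2 := by ring
    simp only [E, hσp, hσ k, hk]
    field_simp [hx (k - 1), hp₀ (k - 2)]
    linear_combination x (k - 1) * p (k - 2) * hp k
  have hcycle := eq_prod_mul_self_of_eq_mul_sub_one hE n
  rw [← map_prod, hσX, eq_comm, mul_left_eq_self₀] at hcycle
  rcases hcycle with h | h
  · exact absurd (inv_eq_one.mp h) hx₁
  · exact sub_eq_zero.mp h

end Cyclic

section Laurent

variable {K : Type} [Field K] {m : ℕ} {F : ZMod m → K}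

theorem yv_ne_zero (n : ZMod m) : yv K m n ≠ 0 :=
  (map_ne_zero_iff _ (IsFractionRing.injective _ _)).mpr (MvPolynomial.X_ne_zero n)

theorem Fc_eq_algebraMap_C (n : ZMod m) :
    Fc K m F n = algebraMap (MvPolynomial (ZMod m) K) (Lm K m) (MvPolynomial.C (F n)) := by
  rw [Fc, IsScalarTower.algebraMap_apply K (MvPolynomial (ZMod m) K), MvPolynomial.algebraMap_eq]

theorem Xv_ne_zero (hF : ∀ n, F n ≠ 0) (n : ZMod m) : Xv K m F n ≠ 0 := by
  refine div_ne_zero ?_ (mul_ne_zero (yv_ne_zero n) (yv_ne_zero (n + 1)))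
  exact (map_ne_zero_iff _ (algebraMap K (Lm K m)).injective).mpr (hF n)

theorem Pv_eq_one_add_Xv_mul_sub [NeZero m] (n : ZMod m) :
    Pv K m F n = 1 + Xv K m F n * Pv K m F (n - 1) - ∏ k, Xv K m F k :=
  one_add_sum_prod_sub_natCast_eq _ n

theorem prod_Xv_eq_boldF_div_boldy_sq [NeZero m] :
    ∏ k, Xv K m F k = boldF K m F / boldy K m ^ 2 := by
  simp only [Xv, boldF, boldy, prod_div_distrib, prod_mul_distrib, sq]
  congr 2
  exact Fintype.prod_equiv (Equiv.addRight 1) _ _ fun _ => rfl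

theorem prod_Xv_ne_one [NeZero m] (hF : ∀ n, F n ≠ 0) : ∏ k, Xv K m F k ≠ 1 := by
  have hy : boldy K m ≠ 0 := prod_ne_zero_iff.mpr fun k _ => yv_ne_zero k
  rw [prod_Xv_eq_boldF_div_boldy_sq, Ne, div_eq_one_iff_eq (pow_ne_zero 2 hy), boldF, boldy]
  simp only [Fc_eq_algebraMap_C, yv, ← map_prod, ← map_pow]
  intro h
  have hcoeff := congrArg MvPolynomial.constantCoeff (IsFractionRing.injective _ (Lm K m) h)
  simp only [MvPolynomial.constantCoeff_C, map_pow, map_prod, MvPolynomial.constantCoeff_X,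
    prod_const, card_univ, ZMod.card, zero_pow (NeZero.ne m), zero_pow two_ne_zero] at hcoeff
  exact prod_ne_zero_iff.mpr (fun k _ => hF k) hcoeff

end Laurent

theorem stmt_10 (hF : ∀ n, F n ≠ 0)
    (σ : Lm K m →ₐ[K] Lm K m)
    (hσ : ∀ n : ZMod m, σ (Xv K m F n) = Pv K m F n / (Xv K m F (n - 1) * Pv K m F (n - 2))) :
    ∀ n : ZMod m,
      σ (Pv K m F n) = Pv K m F (n - 1) * (Xv K m F n / ∏ k : ZMod m, Xv K m F k) :=
  map_eq_of_cyclic_recurrence σ.toRingHom (Xv_ne_zero hF) (prod_Xv_ne_one hF)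
    Pv_eq_one_add_Xv_mul_sub hσ
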